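/- Let n₁, r, n₂ ≥ 1 and n₃ ≥ 1, A : Fin n₁ → Fin r → ZMod n₃ → ℂ and B : Fin r → Fin n₂ → ZMod n₃ → ℂ. Then for every frequency k ∈ ZMod n₃ and all i, j: the mode-3 DFT of the t-product satisfies (A * B)^ i j k = Σ_{l ∈ Fin r} Â i l k · B̂ l j k. That is, the t-product corresponds, slice by slice in the Fourier domain, to ordinary matrix multiplication of the frontal slices. -/

import Mathlib

open Finset

/-- Mode-3 discrete Fourier transform of a third-order tensor. -/
noncomputable def dft3 {n₁ n₂ n₃ : ℕ} [NeZero n₃]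
    (A : Fin n₁ → Fin n₂ → ZMod n₃ → ℂ) : Fin n₁ → Fin n₂ → ZMod n₃ → ℂ :=
  fun i j k => ∑ m : ZMod n₃,
    A i j m * Complex.exp (-(2 * (Real.pi : ℂ) * Complex.I *
      ((k.val : ℂ) * (m.val : ℂ))) / (n₃ : ℂ))

/-- The t-product: matrix multiplication combined with circular convolution
along the third mode. -/
noncomputable def tProd3 {n₁ r n₂ n₃ : ℕ} [NeZero n₃]
    (A : Fin n₁ → Fin r → ZMod n₃ → ℂ) (B : Fin r → Fin n₂ → ZMod n₃ → ℂ) :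
    Fin n₁ → Fin n₂ → ZMod n₃ → ℂ :=
  fun i j k => ∑ l : Fin r, ∑ m : ZMod n₃, A i l m * B l j (k - m)

/-! The DFT kernel `m ↦ exp (-2πi k m / n₃)` is an additive character of `ZMod n₃`, so the DFT
turns circular convolution into pointwise multiplication. Each entry of the t-product is a sum
over `l` of convolutions of tubes, and the DFT is linear. -/

namespace ZMod

open scoped ZMod

variable {N : ℕ} [NeZero N]

noncomputable def circConv (f g : ZMod N → ℂ) : ZMod N → ℂ :=
  fun k => ∑ m, f m * g (k - m)

lemma stdAddChar_neg_mul_eq_exp (k m : ZMod N) :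
    stdAddChar (-(m * k)) =
      Complex.exp (-(2 * (Real.pi : ℂ) * Complex.I * ((k.val : ℂ) * (m.val : ℂ))) / (N : ℂ)) := by
  have hcast : -(m * k) = ((-(m.val * k.val : ℤ) : ℤ) : ZMod N) := by push_cast; simp
  rw [hcast, stdAddChar_coe]
  push_cast
  ring_nf

lemma dft_circConv (f g : ZMod N → ℂ) (k : ZMod N) :
    𝓕 (circConv f g) k = 𝓕 f k * 𝓕 g k := by
  simp only [dft_apply, circConv, smul_eq_mul]
  rw [Fintype.sum_mul_sum]
  simp only [mul_sum]
  rw [sum_comm]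
  refine sum_congr rfl fun m _ => ?_
  -- substitute `j = m + p`, so that `g (j - m) = g p`
  rw [← Equiv.sum_comp (Equiv.addLeft m)]
  refine sum_congr rfl fun p _ => ?_
  rw [Equiv.coe_addLeft, add_sub_cancel_left, add_mul, neg_add, AddChar.map_add_eq_mul]
  ring

end ZMod

open ZMod in
lemma dft3_apply_eq_dft {n₁ n₂ n₃ : ℕ} [NeZero n₃] (A : Fin n₁ → Fin n₂ → ZMod n₃ → ℂ)
    (i : Fin n₁) (j : Fin n₂) (k : ZMod n₃) : dft3 A i j k = 𝓕 (A i j) k := by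
  simp only [dft3, dft_apply, smul_eq_mul, stdAddChar_neg_mul_eq_exp, mul_comm]

lemma tProd3_apply_eq_sum_circConv {n₁ r n₂ n₃ : ℕ} [NeZero n₃]
    (A : Fin n₁ → Fin r → ZMod n₃ → ℂ) (B : Fin r → Fin n₂ → ZMod n₃ → ℂ)
    (i : Fin n₁) (j : Fin n₂) : tProd3 A B i j = ∑ l, ZMod.circConv (A i l) (B l j) := by
  ext k
  simp only [tProd3, ZMod.circConv, Finset.sum_apply]

open ZMod in
theorem dft3_tprod_general {n₁ r n₂ n₃ : ℕ}
    [NeZero n₃] (A : Fin n₁ → Fin r → ZMod n₃ → ℂ)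
    (B : Fin r → Fin n₂ → ZMod n₃ → ℂ) :
    ∀ (k : ZMod n₃) (i : Fin n₁) (j : Fin n₂),
      dft3 (tProd3 A B) i j k = ∑ l : Fin r, dft3 A i l k * dft3 B l j k := by
  intro k i j
  simp only [dft3_apply_eq_dft, tProd3_apply_eq_sum_circConv, map_sum, Finset.sum_apply,
    dft_circConv]

/-- In the Fourier domain, the t-product corresponds slice by slice to
ordinary matrix multiplication of the frontal slices. -/
theorem dft3_tprod {n₁ r n₂ n₃ : ℕ} (hn₁ : 1 ≤ n₁) (hr : 1 ≤ r) (hn₂ : 1 ≤ n₂)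
    [NeZero n₃] (A : Fin n₁ → Fin r → ZMod n₃ → ℂ)
    (B : Fin r → Fin n₂ → ZMod n₃ → ℂ) :
    ∀ (k : ZMod n₃) (i : Fin n₁) (j : Fin n₂),
      dft3 (tProd3 A B) i j k = ∑ l : Fin r, dft3 A i l k * dft3 B l j k :=
  dft3_tprod_general A B
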